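/- arXiv:2101.09655 — 5 statements merged into one kernel-verified Lean document; each statement's English description precedes it below -/
import Mathlib

section
/- Subset internalization: defining R ⊆ R' := (K I)·(R → R')·(K I)^∪ where K := λx.λy.x and I := λx.x, we have t₁ ⟦R ⊆ R'⟧_γ t₂ holds iff the relation ⟦R⟧_γ is included in the relation ⟦R'⟧_γ. -/
namespace RelTT

/-- Untyped lambda terms (de Bruijn indices). -/
inductive Term : Type
  | var : ℕ → Term
  | lam : Term → Term
  | app : Term → Term → Term

namespace Term

/-- Lift free variables ≥ c by one. -/
def lift : Term → ℕ → Term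
  | var k, c => if k < c then var k else var (k+1)
  | lam t, c => lam (lift t (c+1))
  | app t u, c => app (lift t c) (lift u c)

/-- Capture-avoiding substitution of `s` for variable `n`. -/
def subst : Term → ℕ → Term → Term
  | var k, n, s => if k = n then s else if n < k then var (k-1) else var k
  | lam t, n, s => lam (subst t (n+1) (lift s 0))
  | app t u, n, s => app (subst t n s) (subst u n s)

end Term

/-- βη-equivalence of untyped lambda terms. -/
inductive Beq : Term → Term → Prop
  | beta (t u : Term) : Beq (Term.app (Term.lam t) u) (Term.subst t 0 u)
  | eta (t : Term) : Beq (Term.lam (Term.app (Term.lift t 0) (Term.var 0))) t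
  | refl (t : Term) : Beq t t
  | symm {t u} : Beq t u → Beq u t
  | trans {t u v} : Beq t u → Beq u v → Beq t v
  | appCongr {t t' u u'} : Beq t t' → Beq u u' → Beq (Term.app t u) (Term.app t' u')
  | lamCongr {t t'} : Beq t t' → Beq (Term.lam t) (Term.lam t')

/-- Binary relations on terms. -/
abbrev Rel := Term → Term → Prop

/-- A relation is βη-closed iff it respects βη-equivalence on both sides. -/
def BetaEtaClosed (r : Rel) : Prop :=
  ∀ t₁ t₂ t₁' t₂', r t₁ t₂ → Beq t₁' t₁ → Beq t₂' t₂ → r t₁' t₂'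

/-- Relational types of RelTT (type variables are de Bruijn indices). -/
inductive Ty : Type
  | var : ℕ → Ty
  | arrow : Ty → Ty → Ty
  | all : Ty → Ty
  | conv : Ty → Ty
  | comp : Ty → Ty → Ty
  | prom : Term → Ty

/-- Environments map type variables to relations. -/
abbrev Env := ℕ → Rel

def Env.cons (r : Rel) (γ : Env) : Env
  | 0 => r
  | n+1 => γ n

/-- The relational semantics of types. -/
def interp : Ty → Env → Rel
  | Ty.var n, γ => γ n
  | Ty.arrow R R', γ => fun t t' =>
      ∀ a a', interp R γ a a' → interp R' γ (Term.app t a) (Term.app t' a')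
  | Ty.all R, γ => fun t t' =>
      ∀ r : Rel, BetaEtaClosed r → interp R (Env.cons r γ) t t'
  | Ty.conv R, γ => fun t t' => interp R γ t' t
  | Ty.comp R R', γ => fun t t' => ∃ u, interp R γ t u ∧ interp R' γ u t'
  | Ty.prom tm, γ => fun t t' => Beq (Term.app tm t) t'

/-- All relations in the environment are βη-closed. -/
def EnvClosed (γ : Env) : Prop := ∀ n, BetaEtaClosed (γ n)

def I : Term := Term.lam (Term.var 0)
def K : Term := Term.lam (Term.lam (Term.var 1))

/-- Internalized subset type: R ⊆ R' := (K I)·(R → R')·(K I)^∪. -/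
def Ty.sub (R R' : Ty) : Ty :=
  Ty.comp (Ty.prom (Term.app K I)) (Ty.comp (Ty.arrow R R') (Ty.conv (Ty.prom (Term.app K I))))

theorem interp_closed (T : Ty) (γ : Env) (hγ : EnvClosed γ) :
    BetaEtaClosed (interp T γ) := by
  induction T generalizing γ with
  | var n => exact hγ n
  | arrow R R' ihR ihR' =>
      intro t₁ t₂ t₁' t₂' h h1 h2 a a' ha
      exact ihR' γ hγ _ _ _ _ (h a a' ha) (Beq.appCongr h1 (Beq.refl a))
        (Beq.appCongr h2 (Beq.refl a'))
  | all R ih =>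
      intro t₁ t₂ t₁' t₂' h h1 h2 r hr
      refine ih (Env.cons r γ) ?_ _ _ _ _ (h r hr) h1 h2
      intro n
      cases n with
      | zero => exact hr
      | succ n => exact hγ n
  | conv R ih =>
      intro t₁ t₂ t₁' t₂' h h1 h2
      exact ih γ hγ _ _ _ _ h h2 h1
  | comp R R' ihR ihR' =>
      rintro t₁ t₂ t₁' t₂' ⟨u, hu, hu'⟩ h1 h2
      exact ⟨u, ihR γ hγ _ _ _ _ hu h1 (Beq.refl u),
        ihR' γ hγ _ _ _ _ hu' (Beq.refl u) h2⟩
  | prom tm =>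
      intro t₁ t₂ t₁' t₂' h h1 h2
      exact Beq.trans (Beq.appCongr (Beq.refl tm) h1) (Beq.trans h (Beq.symm h2))

theorem KI_beq (t : Term) : Beq (Term.app (Term.app K I) t) I := by
  have h1 : Beq (Term.app K I) (Term.lam I) := Beq.beta _ _
  have h2 : Beq (Term.app (Term.lam I) t) I := Beq.beta _ _
  exact Beq.trans (Beq.appCongr h1 (Beq.refl t)) h2

theorem I_app (t : Term) : Beq (Term.app I t) t := Beq.beta _ _

/-- Subset internalization: t₁ ⟦R ⊆ R'⟧_γ t₂ ↔ ⟦R⟧_γ ⊆ ⟦R'⟧_γ. -/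
theorem subset_internalization (R R' : Ty) (γ : Env) (hγ : EnvClosed γ) (t₁ t₂ : Term) :
    interp (Ty.sub R R') γ t₁ t₂ ↔ ∀ a b, interp R γ a b → interp R' γ a b := by
  constructor
  · rintro ⟨u, hu, v, huv, hv⟩ a b hab
    have hIu : Beq u I := Beq.trans (Beq.symm hu) (KI_beq t₁)
    have hIv : Beq v I := Beq.trans (Beq.symm hv) (KI_beq t₂)
    refine interp_closed R' γ hγ _ _ _ _ (huv a b hab) ?_ ?_
    · exact Beq.symm (Beq.trans (Beq.appCongr hIu (Beq.refl a)) (I_app a))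
    · exact Beq.symm (Beq.trans (Beq.appCongr hIv (Beq.refl b)) (I_app b))
  · intro h
    refine ⟨I, KI_beq t₁, I, ?_, KI_beq t₂⟩
    intro a b hab
    exact interp_closed R' γ hγ _ _ _ _ (h a b hab) (I_app a) (I_app b)

end RelTT
end

section
/- Implicit product: defining R ⇒ R' := K·(R → R')·K^∪ where K := λx.λy.x, we have t₁ ⟦R ⇒ R'⟧_γ t₂ iff for all (x,x') ∈ ⟦R⟧_γ, t₁ ⟦R'⟧_γ t₂. -/
namespace RelTT

/-- Implicit product: R ⇒ R' := K·(R → R')·K^∪. -/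
def Ty.imp (R R' : Ty) : Ty :=
  Ty.comp (Ty.prom K) (Ty.comp (Ty.arrow R R') (Ty.conv (Ty.prom K)))

theorem Term.subst_lift (t : Term) (c : ℕ) (s : Term) : (t.lift c).subst c s = t := by
  induction t generalizing c s with
  | var k =>
    by_cases h : k < c
    · simp [Term.lift, Term.subst, h, Nat.ne_of_lt h, Nat.not_lt.2 (Nat.le_of_lt h)]
    · simp [Term.lift, Term.subst, h, show k + 1 ≠ c by omega, show c < k + 1 by omega]
  | lam t ih => simp [Term.lift, Term.subst, ih]
  | app t u iht ihu => simp [Term.lift, Term.subst, iht, ihu]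

theorem Beq.appLeft {t t' : Term} (h : Beq t t') (u : Term) :
    Beq (Term.app t u) (Term.app t' u) :=
  Beq.appCongr h (Beq.refl u)

theorem beq_K_app_app (t x : Term) : Beq (Term.app (Term.app K t) x) t := by
  have hK : Beq (Term.app K t) (Term.lam (t.lift 0)) := by
    simpa [K, Term.subst] using Beq.beta (Term.lam (Term.var 1)) t
  have hconst : Beq (Term.app (Term.lam (t.lift 0)) x) t := by
    simpa only [Term.subst_lift] using Beq.beta (t.lift 0) x
  exact (hK.appLeft x).trans hconst

theorem BetaEtaClosed.iff {r : Rel} (hr : BetaEtaClosed r) {t₁ t₂ u₁ u₂ : Term}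
    (h₁ : Beq t₁ u₁) (h₂ : Beq t₂ u₂) : r t₁ t₂ ↔ r u₁ u₂ :=
  ⟨fun h => hr _ _ _ _ h h₁.symm h₂.symm, fun h => hr _ _ _ _ h h₁ h₂⟩

theorem EnvClosed.cons {γ : Env} (hγ : EnvClosed γ) {r : Rel} (hr : BetaEtaClosed r) :
    EnvClosed (Env.cons r γ)
  | 0 => hr
  | n + 1 => hγ n

theorem betaEtaClosed_interp (T : Ty) {γ : Env} (hγ : EnvClosed γ) :
    BetaEtaClosed (interp T γ) := by
  induction T generalizing γ with
  | var n => exact hγ n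
  | arrow R R' _ ihR' =>
    intro t₁ t₂ t₁' t₂' h h₁ h₂ a a' ha
    exact ihR' hγ _ _ _ _ (h a a' ha) (h₁.appLeft a) (h₂.appLeft a')
  | all R ih =>
    intro t₁ t₂ t₁' t₂' h h₁ h₂ r hr
    exact ih (hγ.cons hr) _ _ _ _ (h r hr) h₁ h₂
  | conv R ih =>
    intro t₁ t₂ t₁' t₂' h h₁ h₂
    exact ih hγ _ _ _ _ h h₂ h₁
  | comp R R' ihR ihR' =>
    rintro t₁ t₂ t₁' t₂' ⟨u, hu, hu'⟩ h₁ h₂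
    exact ⟨u, ihR hγ _ _ _ _ hu h₁ (Beq.refl u), ihR' hγ _ _ _ _ hu' (Beq.refl u) h₂⟩
  | prom f =>
    intro t₁ t₂ t₁' t₂' h h₁ h₂
    exact ((Beq.appCongr (Beq.refl f) h₁).trans h).trans h₂.symm

theorem interp_prom_comp_conv_prom {S : Ty} {γ : Env} (hS : BetaEtaClosed (interp S γ))
    (f g t₁ t₂ : Term) :
    interp (Ty.comp (Ty.prom f) (Ty.comp S (Ty.conv (Ty.prom g)))) γ t₁ t₂ ↔
      interp S γ (Term.app f t₁) (Term.app g t₂) := by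
  constructor
  · rintro ⟨u, hfu, v, huv, hgv⟩
    exact hS.iff hfu.symm hgv.symm |>.mp huv
  · exact fun h => ⟨_, Beq.refl _, _, h, Beq.refl _⟩

/-- Implicit product: t₁ ⟦R ⇒ R'⟧_γ t₂ ↔ for all (x,x') ∈ ⟦R⟧_γ, t₁ ⟦R'⟧_γ t₂. -/
theorem implicit_product (R R' : Ty) (γ : Env) (hγ : EnvClosed γ) (t₁ t₂ : Term) :
    interp (Ty.imp R R') γ t₁ t₂ ↔ ∀ x x', interp R γ x x' → interp R' γ t₁ t₂ := by
  rw [Ty.imp, interp_prom_comp_conv_prom (betaEtaClosed_interp _ hγ)]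
  refine forall₂_congr fun x x' => imp_congr_right fun _ => ?_
  exact (betaEtaClosed_interp R' hγ).iff (beq_K_app_app t₁ x) (beq_K_app_app t₂ x')

end RelTT
end

section
/- η-law for the unit type: if t ⟦∀X.(X → X)⟧_γ t', then t ⟦∀X.(X → X)⟧_γ I, where I := λx.x. -/
namespace RelTT

/-- η-law for the unit type: if t ⟦∀X.(X → X)⟧_γ t', then t ⟦∀X.(X → X)⟧_γ I. -/
theorem eta_unit (γ : Env) (hγ : EnvClosed γ) (t t' : Term)
    (h : interp (Ty.all (Ty.arrow (Ty.var 0) (Ty.var 0))) γ t t') :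
    interp (Ty.all (Ty.arrow (Ty.var 0) (Ty.var 0))) γ t I := by
  intro r hr a a' ha
  -- use the relation s x y := r x a'
  have hs : BetaEtaClosed (fun x _ => r x a') := by
    intro t₁ t₂ t₁' t₂' h1 h2 _
    exact hr _ _ _ _ h1 h2 (Beq.refl a')
  have key : r (Term.app t a) a' :=
    h (fun x _ => r x a') hs a a' ha
  have hIa : Beq (Term.app I a') a' := Beq.beta (Term.var 0) a'
  exact hr _ _ _ _ key (Beq.refl _) hIa

end RelTT
end

section
/- Identity Inclusion: let e be the environment mapping every type variable to the relation =βη. Then (1) for every ∀⁺ type P, ⟦P⟧_e ⊆ =βη, and (2) for every ∀⁻ type N, =βη ⊆ ⟦N⟧_e. -/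
/-!
Both inclusions are proved together by induction on the class `Foral p`. The arrow rule flips the
polarity, so a `∀⁻` domain contains `=βη` and an arrow type can be fed reflexive arguments; for a
`∀⁺` arrow this leaves `t a =βη t' a` for every `a`, and the Zeta property turns that into
`t =βη t'`. A `∀` is instantiated at `=βη` itself, which leaves `e` unchanged, converse is handled
by symmetry, and a promotion of a term `=βη I` acts as the identity.

Zeta is proved for de Bruijn terms: apply `t` and `t'` to a variable free in neither, lift both
sides under a binder, rename that variable to the bound one and η-contract.
-/

namespace RelTT

/-- Polarities. -/
inductive Pol | pos | neg

/-- The opposite polarity. -/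
def Pol.flip : Pol → Pol
  | .pos => .neg
  | .neg => .pos

/-- The ∀ᵖ classes of types: ∀⁺ (p = pos) and ∀⁻ (p = neg). -/
inductive Foral : Pol → Ty → Prop
  | var (p n) : Foral p (Ty.var n)
  | arrow {p R R'} : Foral p.flip R → Foral p R' → Foral p (Ty.arrow R R')
  | all {R} : Foral .pos R → Foral .pos (Ty.all R)
  | conv {p R} : Foral p R → Foral p (Ty.conv R)
  | prom (p) {t} : Beq t I → Foral p (Ty.prom t)

/-- The environment mapping every type variable to βη-equivalence. -/
def e : Env := fun _ => Beq

namespace Term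

theorem lift_lift_of_le (t : Term) {d c : ℕ} (h : d ≤ c) :
    lift (lift t d) (c + 1) = lift (lift t c) d := by
  induction t generalizing d c with
  | var k => grind [lift]
  | lam t ih => simp only [lift, ih (Nat.succ_le_succ h)]
  | app a b iha ihb => simp only [lift, iha h, ihb h]

theorem lift_subst_of_le (t : Term) {n c : ℕ} (s : Term) (h : n ≤ c) :
    lift (subst t n s) c = subst (lift t (c + 1)) n (lift s c) := by
  induction t generalizing n c s with
  | var k => grind [lift, subst]
  | lam t ih =>
    simp only [lift, subst, ih (lift s 0) (Nat.succ_le_succ h), lift_lift_of_le s (Nat.zero_le c)]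
  | app a b iha ihb => simp only [lift, subst, iha s h, ihb s h]

theorem lift_subst_of_ge (t : Term) {n c : ℕ} (s : Term) (h : c ≤ n) :
    lift (subst t n s) c = subst (lift t c) (n + 1) (lift s c) := by
  induction t generalizing n c s with
  | var k => grind [lift, subst]
  | lam t ih =>
    simp only [lift, subst, ih (lift s 0) (Nat.succ_le_succ h), lift_lift_of_le s (Nat.zero_le c)]
  | app a b iha ihb => simp only [lift, subst, iha s h, ihb s h]

theorem subst_lift_self (t : Term) (c : ℕ) (s : Term) : subst (lift t c) c s = t := by
  induction t generalizing c s with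
  | var k => grind [lift, subst]
  | lam t ih => simp only [lift, subst, ih]
  | app a b iha ihb => simp only [lift, subst, iha, ihb]

theorem subst_subst_of_le (t : Term) {m n : ℕ} (u s : Term) (h : m ≤ n) :
    subst (subst t m u) n s = subst (subst t (n + 1) (lift s m)) m (subst u n s) := by
  induction t generalizing m n u s with
  | var k => grind [subst, subst_lift_self]
  | lam t ih =>
    simp only [subst, ih (lift u 0) (lift s 0) (Nat.succ_le_succ h),
      lift_lift_of_le s (Nat.zero_le m), lift_subst_of_ge u s (Nat.zero_le n)]
  | app a b iha ihb => simp only [subst, iha u s h, ihb u s h]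

theorem exists_lift_eq_self (t : Term) : ∃ n, ∀ c, n ≤ c → t.lift c = t := by
  induction t with
  | var k => exact ⟨k + 1, fun c hc => by simp only [lift, if_pos (by omega : k < c)]⟩
  | lam t ih =>
    obtain ⟨n, hn⟩ := ih
    exact ⟨n, fun c hc => by simp only [lift, hn (c + 1) (by omega)]⟩
  | app a b iha ihb =>
    obtain ⟨n, hn⟩ := iha
    obtain ⟨m, hm⟩ := ihb
    exact ⟨max n m, fun c hc => by simp only [lift, hn c (by omega), hm c (by omega)]⟩

theorem subst_eq_self_of_lift_eq (t : Term) {c : ℕ} (s : Term) (h : t.lift c = t) :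
    t.subst c s = t := by
  induction t generalizing c s with
  | var k => grind [lift, subst]
  | lam t ih => simp_all only [lift, subst, lam.injEq]
  | app a b iha ihb => simp_all only [lift, subst, app.injEq]

end Term

namespace Beq

theorem lift {t u : Term} (h : Beq t u) (c : ℕ) : Beq (t.lift c) (u.lift c) := by
  induction h generalizing c with
  | beta b a =>
    rw [Term.lift_subst_of_le b a (Nat.zero_le c)]
    exact beta _ _
  | eta b =>
    have : (Term.lam (Term.app (b.lift 0) (Term.var 0))).lift c =
        Term.lam (Term.app ((b.lift c).lift 0) (Term.var 0)) := by
      simp only [Term.lift, if_pos (Nat.succ_pos c), Term.lift_lift_of_le b (Nat.zero_le c)]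
    rw [this]
    exact eta _
  | refl t => exact refl _
  | symm _ ih => exact (ih c).symm
  | trans _ _ ih₁ ih₂ => exact (ih₁ c).trans (ih₂ c)
  | appCongr _ _ ih₁ ih₂ => exact appCongr (ih₁ c) (ih₂ c)
  | lamCongr _ ih => exact lamCongr (ih (c + 1))

theorem subst {t u : Term} (h : Beq t u) (n : ℕ) (s : Term) :
    Beq (t.subst n s) (u.subst n s) := by
  induction h generalizing n s with
  | beta b a =>
    rw [Term.subst_subst_of_le b a s (Nat.zero_le n)]
    exact beta _ _
  | eta b =>
    have : (Term.lam (Term.app (b.lift 0) (Term.var 0))).subst n s =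
        Term.lam (Term.app ((b.subst n s).lift 0) (Term.var 0)) := by
      simp only [Term.subst, Term.lift_subst_of_ge b s (Nat.zero_le n),
        if_neg (Nat.succ_ne_zero n).symm, if_neg (Nat.not_lt_zero _)]
    rw [this]
    exact eta _
  | refl t => exact refl _
  | symm _ ih => exact (ih n s).symm
  | trans _ _ ih₁ ih₂ => exact (ih₁ n s).trans (ih₂ n s)
  | appCongr _ _ ih₁ ih₂ => exact appCongr (ih₁ n s) (ih₂ n s)
  | lamCongr _ ih => exact lamCongr (ih (n + 1) (s.lift 0))

theorem of_app_fresh_var {t t' : Term} {N : ℕ} (ht : t.lift N = t) (ht' : t'.lift N = t')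
    (h : Beq (Term.app t (Term.var N)) (Term.app t' (Term.var N))) : Beq t t' := by
  have lift_fresh : ∀ u : Term, u.lift N = u →
      ((u.lift 0).subst (N + 1) (Term.var 0)) = u.lift 0 := fun u hu =>
    Term.subst_eq_self_of_lift_eq _ _ (by rw [Term.lift_lift_of_le u (Nat.zero_le N), hu])
  have h_eta := (h.lift 0).subst (N + 1) (Term.var 0)
  simp only [Term.lift, Term.subst, if_neg (Nat.not_lt_zero N),
    lift_fresh t ht, lift_fresh t' ht'] at h_eta
  exact (eta t).symm.trans ((lamCongr h_eta).trans (eta t'))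

theorem of_forall_app {t t' : Term} (h : ∀ a, Beq (Term.app t a) (Term.app t' a)) :
    Beq t t' := by
  obtain ⟨n, hn⟩ := t.exists_lift_eq_self
  obtain ⟨m, hm⟩ := t'.exists_lift_eq_self
  exact of_app_fresh_var (hn _ (le_max_left n m)) (hm _ (le_max_right n m)) (h _)

theorem I_app (t : Term) : Beq (Term.app I t) t :=
  beta (Term.var 0) t

end Beq

theorem betaEtaClosed_beq : BetaEtaClosed Beq :=
  fun _ _ _ _ h h₁ h₂ => h₁.trans (h.trans h₂.symm)

theorem Env.cons_beq_e : Env.cons Beq e = e := by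
  funext n
  cases n <;> rfl

def Pol.Included : Pol → Rel → Prop
  | .pos, r => r ≤ Beq
  | .neg, r => Beq ≤ r

theorem Foral.included {p : Pol} {T : Ty} (h : Foral p T) : p.Included (interp T e) := by
  induction h with
  | var p n => cases p <;> exact le_rfl
  | @arrow p _ _ _ _ ihR ihR' =>
    cases p with
    | pos => exact fun t t' h => Beq.of_forall_app fun a => ihR' _ _ (h a a (ihR a a (.refl a)))
    | neg => exact fun t t' h a a' ha => ihR' _ _ (h.appCongr (ihR a a' ha))
  | all _ ih =>
    intro t t' h
    have h_beq := h Beq betaEtaClosed_beq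
    rw [Env.cons_beq_e] at h_beq
    exact ih t t' h_beq
  | @conv p _ _ ih =>
    cases p with
    | pos => exact fun t t' h => (ih t' t h).symm
    | neg => exact fun t t' h => ih t' t h.symm
  | @prom p tm htm =>
    have tm_app : ∀ t, Beq (Term.app tm t) t := fun t =>
      (htm.appCongr (.refl t)).trans (Beq.I_app t)
    cases p with
    | pos => exact fun t t' h => (tm_app t).symm.trans h
    | neg => exact fun t t' h => (tm_app t).trans h

/-- Identity Inclusion: (1) for every ∀⁺ type P, ⟦P⟧_e ⊆ =βη;
(2) for every ∀⁻ type N, =βη ⊆ ⟦N⟧_e. -/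
theorem identity_inclusion :
    (∀ P, Foral .pos P → ∀ t t', interp P e t t' → Beq t t') ∧
    (∀ N, Foral .neg N → ∀ t t', Beq t t' → interp N e t t') :=
  ⟨fun _ h => h.included, fun _ h => h.included⟩

end RelTT
end

section
/- Monotonicity: suppose r₊ and r₋ are βη-closed relations with r₊ ⊆ r₋. If type variable X occurs only with polarity p in relational type R (written X ∈ᵖ R), then ⟦R⟧_{γ[X↦r_p]} ⊆ ⟦R⟧_{γ[X↦r_p̄]}, where for p = + this says the interpretation is monotone in X and for p = − antitone. -/
namespace RelTT

/-- X ∈ᵖ R : type variable n occurs only with polarity p in R. -/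
inductive OccPol : Pol → ℕ → Ty → Prop
  | varEq (n) : OccPol .pos n (Ty.var n)
  | varNe (p n m) : m ≠ n → OccPol p n (Ty.var m)
  | arrow {p n R R'} : OccPol p.flip n R → OccPol p n R' → OccPol p n (Ty.arrow R R')
  | all {p n R} : OccPol p (n+1) R → OccPol p n (Ty.all R)
  | conv {p n R} : OccPol p n R → OccPol p n (Ty.conv R)
  | comp {p n R R'} : OccPol p n R → OccPol p n R' → OccPol p n (Ty.comp R R')
  | prom (p n t) : OccPol p n (Ty.prom t)

/-- Update an environment at variable n. -/
def Env.set (γ : Env) (n : ℕ) (r : Rel) : Env := fun m => if m = n then r else γ m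

/-- Select a relation by polarity. -/
def Pol.pick : Pol → Rel → Rel → Rel
  | .pos, rp, _ => rp
  | .neg, _, rm => rm

theorem Env.cons_set (r s : Rel) (γ : Env) (n : ℕ) :
    Env.cons r (Env.set γ n s) = Env.set (Env.cons r γ) (n+1) s := by
  funext m
  cases m with
  | zero => simp [Env.cons, Env.set]
  | succ k => simp [Env.cons, Env.set]

theorem mono_aux (rpos rneg : Rel)
    (hsub : ∀ a b, rpos a b → rneg a b) :
    ∀ (p : Pol) (n : ℕ) (R : Ty), OccPol p n R → ∀ (γ : Env) t t',
      interp R (γ.set n (p.pick rpos rneg)) t t' →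
      interp R (γ.set n (p.flip.pick rpos rneg)) t t' := by
  intro p n R hR
  induction hR with
  | varEq n =>
    intro γ t t' h
    simp only [interp, Env.set, if_pos rfl] at *
    exact hsub _ _ h
  | varNe p n m hne =>
    intro γ t t' h
    simpa only [interp, Env.set, if_neg hne] using h
  | arrow _ _ ih1 ih2 =>
    rename_i p n R R' _ _
    intro γ t t' h a a' ha
    have hff : p.flip.flip = p := by cases p <;> rfl
    have := ih1 γ a a' ha
    rw [hff] at this
    exact ih2 γ _ _ (h a a' this)
  | all _ ih =>
    intro γ t t' h r hr
    rw [Env.cons_set]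
    exact ih (Env.cons r γ) t t' (by rw [← Env.cons_set]; exact h r hr)
  | conv _ ih =>
    intro γ t t' h
    exact ih γ t' t h
  | comp _ _ ih1 ih2 =>
    intro γ t t' h
    obtain ⟨u, h1, h2⟩ := h
    exact ⟨u, ih1 γ t u h1, ih2 γ u t' h2⟩
  | prom p n tm =>
    intro γ t t' h
    exact h

/-- Monotonicity: if rpos ⊆ rneg and X ∈ᵖ R, then
⟦R⟧_{γ[X↦r_p]} ⊆ ⟦R⟧_{γ[X↦r_p̄]}. -/
theorem monotonicity (rpos rneg : Rel) (hpos : BetaEtaClosed rpos) (hneg : BetaEtaClosed rneg)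
    (hsub : ∀ a b, rpos a b → rneg a b) (p : Pol) (n : ℕ) (R : Ty) (hR : OccPol p n R)
    (γ : Env) (hγ : EnvClosed γ) :
    ∀ t t', interp R (γ.set n (p.pick rpos rneg)) t t' →
      interp R (γ.set n (p.flip.pick rpos rneg)) t t' :=
  mono_aux rpos rneg hsub p n R hR γ

end RelTT
end
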